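/- Let f : S_d → U_d (d ≥ 3) be a crossed homomorphism such that f(σ_i) = 0 for all adjacent transpositions σ_i with i ≠ 1. Then there exists an integer c such that f(σ_1) = c·Σ_{j=3}^{d}(e_{1,j} − e_{2,j}), and f is the principal crossed homomorphism associated to m = −c·Σ_{j=2}^{d} e_{1,j}. -/

import Mathlib

open Pointwise

/-- The set of 2-element subsets of `{1, ..., d}`, the basis of `U_d`. -/
abbrev TwoSubsets (d : ℕ) : Type := {s : Finset (Fin d) // s.card = 2}

/-- `S_d` acts on 2-element subsets by `τ • {i,j} = {τ i, τ j}`. -/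
instance (d : ℕ) : MulAction (Equiv.Perm (Fin d)) (TwoSubsets d) where
  smul σ s := ⟨σ • s.1, by rw [Finset.card_smul_finset]; exact s.2⟩
  one_smul s := Subtype.ext (one_smul _ s.1)
  mul_smul a b s := Subtype.ext (mul_smul a b s.1)

/-- The basis element `e_{i,j}` of `U_d` (and `0` if `i = j`). -/
noncomputable def pairElt {d : ℕ} (i j : Fin d) : TwoSubsets d →₀ ℤ :=
  if h : i ≠ j then Finsupp.single ⟨{i, j}, Finset.card_pair h⟩ 1 else 0

/-!
Write `v = f σ₁` and `s_a = Σ_j e_{a,j}` (`starElt`). Since `σ₁² = 1`, the cocycle relation gives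
`σ₁ • v = -v`; since `σ₁` commutes with `σ_i` for `i ≥ 3` and `f σ_i = 0`, it also gives
`σ_i • v = v`. Anti-invariance kills the coefficients of `v` at the pairs fixed by `σ₁`, and
invariance under `σ_3, …, σ_{d-1}` makes the coefficient at `{1, j}` (`j ≥ 3`) a constant `c`,
so `v = c • (s_1 - s_2)`. The principal crossed homomorphism of `m = -c • s_1` takes the same
value at `σ₁` and vanishes at the other `σ_i` because `s_1` is fixed by permutations fixing `1`;
two crossed homomorphisms agreeing on the generators `σ_i` of `S_d` agree everywhere.
-/

open Equiv Finset

section CrossedHom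

variable {k G V : Type*} [CommSemiring k] [Monoid G] [AddCommGroup V] [Module k V]

def IsCrossedHom (ρ : Representation k G V) (f : G → V) : Prop :=
  ∀ g h, f (g * h) = f g + ρ g (f h)

theorem isCrossedHom_principal (ρ : Representation k G V) (m : V) :
    IsCrossedHom ρ (fun g => ρ g m - m) := fun g h => by
  simp only [map_mul, Module.End.mul_apply, map_sub]
  abel

namespace IsCrossedHom

variable {ρ : Representation k G V} {f : G → V}

theorem map_one (hf : IsCrossedHom ρ f) : f 1 = 0 := by
  simpa using hf 1 1

theorem apply_self_of_mul_self_eq_one (hf : IsCrossedHom ρ f) {g : G} (hg : g * g = 1) :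
    ρ g (f g) = -f g := by
  have := hf g g
  rw [hg, hf.map_one] at this
  exact eq_neg_of_add_eq_zero_right this.symm

theorem apply_eq_self_of_commute (hf : IsCrossedHom ρ f) {g h : G} (hgh : Commute g h)
    (hh : f h = 0) :
    ρ h (f g) = f g := by
  have hgh' := hf g h
  have hhg := hf h g
  rw [hh, map_zero, add_zero] at hgh'
  rw [hh, zero_add, ← hgh.eq, hgh'] at hhg
  exact hhg.symm

theorem eq_of_eqOn_of_closure_eq_top {f' : G → V} (hf : IsCrossedHom ρ f)
    (hf' : IsCrossedHom ρ f') {S : Set G} (hS : Submonoid.closure S = ⊤) (heq : Set.EqOn f f' S) :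
    f = f' := by
  funext g
  induction (hS ▸ Submonoid.mem_top g : g ∈ Submonoid.closure S) using
    Submonoid.closure_induction with
  | mem g hg => exact heq hg
  | one => rw [hf.map_one, hf'.map_one]
  | mul g h _ _ hg hh => rw [hf, hf', hg, hh]

end IsCrossedHom

end CrossedHom

section FinsuppRep

variable (k G H : Type*) [CommSemiring k] [Monoid G] [MulAction G H]

noncomputable def finsuppRep : Representation k G (H →₀ k) where
  toFun g := Finsupp.lmapDomain k k (g • ·)
  map_one' := by ext; simp
  map_mul' x y := by ext; simp [mul_smul]

variable {k G H}

theorem coeff_ofMulAction_ofCoeff (g : G) (x : H →₀ k) :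
    (Representation.ofMulAction k G H g (MonoidAlgebra.ofCoeff x)).coeff = finsuppRep k G H g x :=
  rfl

theorem finsuppRep_single (g : G) (x : H) (r : k) :
    finsuppRep k G H g (Finsupp.single x r) = Finsupp.single (g • x) r :=
  Finsupp.mapDomain_single

theorem finsuppRep_apply_smul {G : Type*} [Group G] [MulAction G H] (g : G) (x : H →₀ k) (h : H) :
    finsuppRep k G H g x (g • h) = x h :=
  Finsupp.mapDomain_apply (MulAction.injective g) x h

end FinsuppRep

namespace TwoSubsets

variable {d : ℕ}

def pair (i j : Fin d) (h : i ≠ j) : TwoSubsets d := ⟨{i, j}, card_pair h⟩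

@[simp] theorem val_pair {i j : Fin d} (h : i ≠ j) : (pair i j h).1 = {i, j} := rfl

@[simp] theorem val_smul (τ : Perm (Fin d)) (s : TwoSubsets d) : (τ • s).1 = τ • s.1 := rfl

theorem pair_eq_iff {i j : Fin d} (h : i ≠ j) (s : TwoSubsets d) :
    pair i j h = s ↔ i ∈ s.1 ∧ j ∈ s.1 := by
  refine ⟨by rintro rfl; simp, fun ⟨hi, hj⟩ => Subtype.ext ?_⟩
  refine eq_of_subset_of_card_le (insert_subset_iff.2 ⟨hi, singleton_subset_iff.2 hj⟩) ?_
  rw [s.2, val_pair, card_pair h]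

theorem exists_eq_pair (s : TwoSubsets d) {a : Fin d} (ha : a ∈ s.1) :
    ∃ b, ∃ h : a ≠ b, s = pair a b h := by
  obtain ⟨b, hb⟩ := card_eq_one.1 (show (s.1.erase a).card = 1 by rw [card_erase_of_mem ha, s.2])
  have hba : b ≠ a := ne_of_mem_erase (hb ▸ mem_singleton_self b)
  exact ⟨b, hba.symm, Subtype.ext (by rw [val_pair, ← insert_erase ha, hb])⟩

theorem mem_swap_smul_iff {a b x : Fin d} (s : TwoSubsets d) :
    x ∈ (swap a b • s).1 ↔ swap a b x ∈ s.1 := by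
  rw [val_smul, ← inv_smul_mem_iff, swap_inv, Perm.smul_def]

theorem swap_smul_eq_self {a b : Fin d} (s : TwoSubsets d) (h : a ∈ s.1 ↔ b ∈ s.1) :
    swap a b • s = s := by
  refine Subtype.ext (Finset.ext fun x => ?_)
  rw [mem_swap_smul_iff, swap_apply_def]
  split_ifs with hxa hxb
  · rw [hxa]; exact h.symm
  · rw [hxb]; exact h
  · rfl

end TwoSubsets

open TwoSubsets

section PairElt

variable {d : ℕ}

theorem pairElt_eq_single {i j : Fin d} (h : i ≠ j) : pairElt i j = Finsupp.single (pair i j h) 1 :=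
  dif_pos h

@[simp] theorem pairElt_self (i : Fin d) : pairElt i i = 0 :=
  dif_neg (not_not.2 rfl)

theorem pairElt_comm (i j : Fin d) : pairElt i j = pairElt j i := by
  rcases eq_or_ne i j with rfl | h
  · rfl
  · rw [pairElt_eq_single h, pairElt_eq_single h.symm]
    exact congrArg (Finsupp.single · 1) (Subtype.ext (pair_comm i j))

theorem pairElt_apply (i j : Fin d) (s : TwoSubsets d) :
    pairElt i j s = if i ∈ s.1 ∧ j ∈ s.1 ∧ i ≠ j then 1 else 0 := by
  rcases eq_or_ne i j with rfl | h
  · simp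
  · simp [pairElt_eq_single h, Finsupp.single_apply, pair_eq_iff, h]

theorem finsuppRep_pairElt (τ : Perm (Fin d)) (i j : Fin d) :
    finsuppRep ℤ _ _ τ (pairElt i j) = pairElt (τ i) (τ j) := by
  rcases eq_or_ne i j with rfl | h
  · simp
  · rw [pairElt_eq_single h, pairElt_eq_single (τ.injective.ne h), finsuppRep_single]
    exact congrArg (Finsupp.single · 1) (Subtype.ext (by simp [smul_finset_insert, Perm.smul_def]))

noncomputable def starElt (a : Fin d) : TwoSubsets d →₀ ℤ := ∑ j, pairElt a j

theorem starElt_apply (a : Fin d) (s : TwoSubsets d) :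
    starElt a s = if a ∈ s.1 then 1 else 0 := by
  simp only [starElt, Finsupp.finsetSum_apply, pairElt_apply]
  split_ifs with ha
  · obtain ⟨b, hab, rfl⟩ := exists_eq_pair s ha
    have hmem : ∀ j, (a ∈ (pair a b hab).1 ∧ j ∈ (pair a b hab).1 ∧ a ≠ j) ↔ j = b := by
      intro j
      simp only [val_pair, mem_insert, mem_singleton]
      constructor
      · rintro ⟨-, rfl | rfl, hj⟩ <;> tauto
      · rintro rfl; simp [hab]
    simp only [hmem, sum_ite_eq', mem_univ, if_true]
  · simp [ha]

theorem finsuppRep_starElt (τ : Perm (Fin d)) (a : Fin d) :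
    finsuppRep ℤ _ _ τ (starElt a) = starElt (τ a) := by
  simp only [starElt, map_sum, finsuppRep_pairElt]
  exact Equiv.sum_comp τ (pairElt (τ a))

end PairElt

theorem sum_filter_one_le_pairElt_zero {n : ℕ} :
    ∑ j ∈ univ.filter (fun j : Fin (n + 1) => 1 ≤ j.val), pairElt 0 j = starElt 0 := by
  refine sum_filter_of_ne fun j _ hj => Nat.one_le_iff_ne_zero.2 fun h0 => hj ?_
  rw [show j = 0 from Fin.ext h0, pairElt_self]

theorem sum_filter_two_le_pairElt_sub {n : ℕ} :
    ∑ j ∈ univ.filter (fun j : Fin (n + 2) => 2 ≤ j.val), (pairElt 0 j - pairElt 1 j)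
      = starElt 0 - starElt 1 := by
  simp [sum_filter, starElt, Fin.sum_univ_succ, pairElt_comm 1 0]

theorem commute_swap_zero_one_swap_castSucc_succ {n : ℕ} {i : Fin (n + 2)} (hi : 2 ≤ i.val) :
    Commute (swap (0 : Fin (n + 3)) 1) (swap i.castSucc i.succ) := by
  refine (Perm.disjoint_swap_swap ?_).commute
  simp only [List.nodup_cons, List.mem_cons, List.not_mem_nil, List.nodup_nil, Fin.ext_iff,
    Fin.val_zero, Fin.val_one, Fin.val_castSucc, Fin.val_succ, or_false, not_false_eq_true,
    and_true]
  omega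

section AntiInvariant

variable {n : ℕ} {v : TwoSubsets (n + 3) →₀ ℤ}

theorem apply_pair_zero_eq_of_invariant
    (hinv : ∀ i : Fin (n + 2), 2 ≤ i.val → ∀ s, v (swap i.castSucc i.succ • s) = v s)
    {b : Fin (n + 3)} (h : 0 ≠ b) (hb : 2 ≤ b.val) :
    v (pair 0 b h) = v (pair 0 ⟨2, by omega⟩ (Fin.ne_of_val_ne (by simp))) := by
  obtain ⟨k, hk⟩ := b
  change 2 ≤ k at hb
  revert hk
  induction k, hb using Nat.le_induction with
  | base => intro _ _; rfl
  | succ k hk2 ih =>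
    intro hk h
    have hstep : swap (⟨k, by omega⟩ : Fin (n + 2)).castSucc (⟨k, by omega⟩ : Fin (n + 2)).succ •
        pair 0 ⟨k, by omega⟩ (Fin.ne_of_val_ne (by simp; omega)) = pair 0 ⟨k + 1, hk⟩ h := by
      refine Subtype.ext ?_
      simp only [Fin.castSucc_mk, Fin.succ_mk, val_smul, val_pair, smul_finset_insert,
        Perm.smul_def, smul_finset_singleton, swap_apply_left]
      rw [swap_apply_of_ne_of_ne] <;> simp [Fin.ext_iff]
      omega
    rw [← hstep, hinv ⟨k, by omega⟩ hk2]
    exact ih _ _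

theorem apply_eq_of_zero_mem_of_one_notMem
    (hinv : ∀ i : Fin (n + 2), 2 ≤ i.val → ∀ s, v (swap i.castSucc i.succ • s) = v s)
    {s : TwoSubsets (n + 3)} (h0 : 0 ∈ s.1) (h1 : 1 ∉ s.1) :
    v s = v (pair 0 ⟨2, by omega⟩ (Fin.ne_of_val_ne (by simp))) := by
  obtain ⟨b, hb, rfl⟩ := exists_eq_pair s h0
  refine apply_pair_zero_eq_of_invariant hinv hb ?_
  have hb1 : b ≠ 1 := by rintro rfl; simp at h1
  rw [Ne, Fin.ext_iff, Fin.val_zero] at hb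
  rw [Ne, Fin.ext_iff, Fin.val_one] at hb1
  omega

theorem exists_eq_smul_starElt_sub_starElt
    (hσ : finsuppRep ℤ _ _ (swap (0 : Fin (n + 3)) 1) v = -v)
    (hs : ∀ i : Fin (n + 2), 2 ≤ i.val → finsuppRep ℤ _ _ (swap i.castSucc i.succ) v = v) :
    ∃ c : ℤ, v = c • (starElt 0 - starElt 1) := by
  have hanti : ∀ s, v (swap (0 : Fin (n + 3)) 1 • s) = -v s := fun s => by
    have := finsuppRep_apply_smul (swap (0 : Fin (n + 3)) 1) v s
    rw [hσ, Finsupp.neg_apply] at this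
    omega
  have hinv : ∀ i : Fin (n + 2), 2 ≤ i.val → ∀ s, v (swap i.castSucc i.succ • s) = v s :=
    fun i hi s => by simpa [hs i hi] using finsuppRep_apply_smul (swap i.castSucc i.succ) v s
  refine ⟨v (pair 0 ⟨2, by omega⟩ (Fin.ne_of_val_ne (by simp))), Finsupp.ext fun s => ?_⟩
  simp only [Finsupp.smul_apply, Finsupp.sub_apply, starElt_apply, smul_eq_mul]
  by_cases h0 : 0 ∈ s.1 <;> by_cases h1 : 1 ∈ s.1
  · have := hanti s
    rw [swap_smul_eq_self s (iff_of_true h0 h1)] at this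
    rw [if_pos h0, if_pos h1]
    omega
  · simp [h0, h1, apply_eq_of_zero_mem_of_one_notMem hinv h0 h1]
  · have h0' : 0 ∈ (swap (0 : Fin (n + 3)) 1 • s).1 := by rwa [mem_swap_smul_iff, swap_apply_left]
    have h1' : 1 ∉ (swap (0 : Fin (n + 3)) 1 • s).1 := by rwa [mem_swap_smul_iff, swap_apply_right]
    have := hanti s
    rw [apply_eq_of_zero_mem_of_one_notMem hinv h0' h1'] at this
    rw [if_neg h0, if_pos h1]
    omega
  · have := hanti s
    rw [swap_smul_eq_self s (iff_of_false h0 h1)] at this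
    rw [if_neg h0, if_neg h1]
    omega

end AntiInvariant

/-- Indices are `0`-based: the paper's `σ_i` is `swap ⟨i−1⟩ ⟨i⟩`, its point `j` is `⟨j−1⟩`. -/
theorem stmt_14 (d : ℕ) (hd : 3 ≤ d)
    (f : Equiv.Perm (Fin d) → (TwoSubsets d →₀ ℤ))
    (hf : ∀ τ σ : Equiv.Perm (Fin d),
      f (τ * σ) = f τ +
        (Representation.ofMulAction ℤ (Equiv.Perm (Fin d)) (TwoSubsets d) τ
          (MonoidAlgebra.ofCoeff (f σ))).coeff)
    (hvanish : ∀ (i : ℕ) (h1 : 2 ≤ i) (h2 : i < d),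
      f (Equiv.swap ⟨i - 1, by omega⟩ ⟨i, h2⟩) = 0) :
    ∃ c : ℤ,
      f (Equiv.swap ⟨0, by omega⟩ ⟨1, by omega⟩)
        = c • ∑ j ∈ Finset.univ.filter (fun j : Fin d => 2 ≤ j.val),
            (pairElt ⟨0, by omega⟩ j - pairElt ⟨1, by omega⟩ j) ∧
      ∀ τ : Equiv.Perm (Fin d),
        f τ = (Representation.ofMulAction ℤ (Equiv.Perm (Fin d)) (TwoSubsets d) τ
                (MonoidAlgebra.ofCoeff ((-c) • ∑ j ∈ Finset.univ.filter (fun j : Fin d => 1 ≤ j.val),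
                  pairElt ⟨0, by omega⟩ j))).coeff
              - (-c) • ∑ j ∈ Finset.univ.filter (fun j : Fin d => 1 ≤ j.val),
                  pairElt ⟨0, by omega⟩ j := by
  obtain ⟨n, rfl⟩ : ∃ n, d = n + 3 := ⟨d - 3, by omega⟩
  have hcross : IsCrossedHom (finsuppRep ℤ _ _) f := hf
  have hgen : ∀ i : Fin (n + 2), i ≠ 0 → f (swap i.castSucc i.succ) = 0 := fun i hi =>
    hvanish (i.val + 1) (by have := Fin.val_ne_zero_iff.2 hi; omega) (by omega)
  have hinv (i : Fin (n + 2)) (hi : 2 ≤ i.val) :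
      finsuppRep ℤ _ _ (swap i.castSucc i.succ) (f (swap 0 1)) = f (swap 0 1) :=
    hcross.apply_eq_self_of_commute (commute_swap_zero_one_swap_castSucc_succ hi)
      (hgen i (by rintro rfl; simp at hi))
  obtain ⟨c, hc⟩ := exists_eq_smul_starElt_sub_starElt
    (hcross.apply_self_of_mul_self_eq_one (swap_mul_self 0 1)) hinv
  simp only [Fin.zero_eta, Fin.mk_one, coeff_ofMulAction_ofCoeff, sum_filter_one_le_pairElt_zero,
    sum_filter_two_le_pairElt_sub]
  refine ⟨c, hc, congrFun (hcross.eq_of_eqOn_of_closure_eq_top (isCrossedHom_principal _ _)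
    (Perm.mclosure_swap_castSucc_succ _) ?_)⟩
  rintro _ ⟨i, rfl⟩
  dsimp only
  rw [map_smul, finsuppRep_starElt]
  by_cases hi : i = 0
  · subst hi
    rw [Fin.castSucc_zero, Fin.succ_zero_eq_one, swap_apply_left, hc]
    module
  · rw [hgen i hi, swap_apply_of_ne_of_ne (Fin.castSucc_ne_zero_iff.2 hi).symm
      (Fin.succ_ne_zero i).symm, sub_self]
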